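/- For each z ∈ Z, the map h ↦ u(h, h^{-1}z) is a bijection from H to G, and consequently the map Φ_z : [0,1]^G → [0,1]^H given by Φ_z(b)(h) = b(u(h, h^{-1}z)) is a measure-preserving bijection from ([0,1]^G, Lebesgue product measure) to ([0,1]^H, Lebesgue product measure). Moreover Φ_{gz}(g·b) = v(g,z)·Φ_z(b) for all g ∈ G, where G and H act on [0,1]^G and [0,1]^H by Bernoulli shift. -/

import Mathlib

open MeasureTheory
open scoped ENNReal unitInterval

/-- `μ` is the product (Bernoulli) measure on `ι → K` with base measure `μK`. -/
def IsProductMeasure {ι K : Type*} [MeasurableSpace K]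
    (μK : Measure K) (μ : Measure (ι → K)) : Prop :=
  IsProbabilityMeasure μ ∧
    ∀ (Q : Finset ι) (S : ι → Set K), (∀ i ∈ Q, MeasurableSet (S i)) →
      μ {f | ∀ i ∈ Q, f i ∈ S i} = ∏ i ∈ Q, μK (S i)

/-- The Bernoulli shift action of `G` on `G → K`: `(g • x)(h) = x (g⁻¹ h)`. -/
def bshift {G K : Type*} [Group G] (g : G) (x : G → K) : G → K :=
  fun h => x (g⁻¹ * h)

/-!
Since `u(h, h⁻¹z)` moves `h⁻¹z` to `z`, it is the unique `g` with `g⁻¹z = h⁻¹z` (freeness of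
`G`). Freeness of `H` makes `h ↦ u(h, h⁻¹z)` injective and equality of orbits makes it
surjective; the same characterization gives `u(h, h⁻¹gz) = g u(k, k⁻¹z)` with `k = v(g,z)⁻¹h`,
which is the equivariance. `Φ_z` is precomposition with this bijection, which carries cylinder
sets to cylinder sets of the same product measure; since cylinders form a π-system generating
the product σ-algebra, it is measure preserving.
-/

namespace IsProductMeasure

variable {ι κ K : Type*} [MeasurableSpace K] {μK : Measure K}

theorem ext {μ ν : Measure (ι → K)} (hμ : IsProductMeasure μK μ) (hν : IsProductMeasure μK ν) :
    μ = ν := by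
  have := hμ.1
  refine ext_of_generate_finite _ generateFrom_squareCylinders.symm
    (isPiSystem_squareCylinders (fun _ => MeasurableSpace.isPiSystem_measurableSet)
      (fun _ => MeasurableSet.univ)) ?_ (hμ.1.measure_univ.trans hν.1.measure_univ.symm)
  rintro _ ⟨Q, t, ht, rfl⟩
  have ht' : ∀ i ∈ Q, MeasurableSet (t i) := fun i _ => ht i (Set.mem_univ i)
  exact (hμ.2 Q t ht').trans (hν.2 Q t ht').symm

theorem map_comp_equiv {μ : Measure (κ → K)} (hμ : IsProductMeasure μK μ) (e : ι ≃ κ) :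
    IsProductMeasure μK (μ.map fun x => x ∘ e) := by
  have hmeas : Measurable fun x : κ → K => x ∘ e := by fun_prop
  have := hμ.1
  refine ⟨Measure.isProbabilityMeasure_map hmeas.aemeasurable, fun Q S hS => ?_⟩
  have hcyl : MeasurableSet {f : ι → K | ∀ i ∈ Q, f i ∈ S i} :=
    MeasurableSet.pi Q.countable_toSet hS
  have hpre : (fun x : κ → K => x ∘ e) ⁻¹' {f | ∀ i ∈ Q, f i ∈ S i}
      = {x | ∀ k ∈ Q.map e.toEmbedding, x k ∈ S (e.symm k)} := by
    ext x
    simp only [Set.mem_preimage, Set.mem_ofPred_eq, Finset.forall_mem_map, Function.comp_apply,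
      Equiv.coe_toEmbedding, Equiv.symm_apply_apply]
  have hS' : ∀ k ∈ Q.map e.toEmbedding, MeasurableSet (S (e.symm k)) :=
    Finset.forall_mem_map.2 fun i hi => by simpa using hS i hi
  rw [Measure.map_apply hmeas hcyl, hpre, hμ.2 _ _ hS', Finset.prod_map]
  simp only [Equiv.coe_toEmbedding, Equiv.symm_apply_apply]

theorem measurePreserving_comp_equiv {μ : Measure (κ → K)} {ν : Measure (ι → K)}
    (hμ : IsProductMeasure μK μ) (hν : IsProductMeasure μK ν) (e : ι ≃ κ) :
    MeasurePreserving (fun x => x ∘ e) μ ν :=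
  ⟨by fun_prop, (hμ.map_comp_equiv e).ext hν⟩

end IsProductMeasure

section Rearrangement

variable {G H Z : Type*} [Group G] [Group H] [MulAction G Z] [MulAction H Z]

theorem eq_of_smul_eq_smul_of_free (hG : ∀ (g : G) (z : Z), g • z = z → g = 1) {g g' : G}
    {z : Z} (h : g • z = g' • z) : g = g' := by
  have : (g'⁻¹ * g) • z = z := by rw [mul_smul, h, inv_smul_smul]
  exact (inv_mul_eq_one.1 (hG _ _ this)).symm

def rearrangement (u : H → Z → G) (z : Z) (h : H) : G :=
  u h (h⁻¹ • z)

variable {u : H → Z → G}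

theorem inv_rearrangement_smul (hu : ∀ h z, u h z • z = h • z) (z : Z) (h : H) :
    (rearrangement u z h)⁻¹ • z = h⁻¹ • z := by
  rw [inv_smul_eq_iff, rearrangement, hu, smul_inv_smul]

theorem rearrangement_eq_of_inv_smul_eq (hG : ∀ (g : G) (z : Z), g • z = z → g = 1)
    (hu : ∀ h z, u h z • z = h • z) {z : Z} {h : H} {g : G} (hg : g⁻¹ • z = h⁻¹ • z) :
    rearrangement u z h = g :=
  inv_injective <| eq_of_smul_eq_smul_of_free hG <| (inv_rearrangement_smul hu z h).trans hg.symm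

theorem rearrangement_bijective (hG : ∀ (g : G) (z : Z), g • z = z → g = 1)
    (hH : ∀ (h : H) (z : Z), h • z = z → h = 1) (horb : ∀ (z : Z) (g : G), ∃ h : H, h • z = g • z)
    (hu : ∀ h z, u h z • z = h • z) (z : Z) :
    Function.Bijective (rearrangement u z) := by
  refine ⟨fun h h' hh => inv_injective <| eq_of_smul_eq_smul_of_free hH (z := z) ?_, fun g => ?_⟩
  · rw [← inv_rearrangement_smul hu, hh, inv_rearrangement_smul hu]
  · obtain ⟨h, hh⟩ := horb z g⁻¹
    exact ⟨h⁻¹, rearrangement_eq_of_inv_smul_eq hG hu (by rw [inv_inv, hh])⟩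

theorem rearrangement_smul (hG : ∀ (g : G) (z : Z), g • z = z → g = 1)
    (hu : ∀ h z, u h z • z = h • z) {v : G → Z → H} (hv : ∀ g z, v g z • z = g • z)
    (g : G) (z : Z) (h : H) :
    rearrangement u (g • z) h = g * rearrangement u z ((v g z)⁻¹ * h) := by
  apply rearrangement_eq_of_inv_smul_eq hG hu
  rw [mul_inv_rev, mul_smul, inv_smul_smul, inv_rearrangement_smul hu, ← hv g z, mul_inv_rev,
    inv_inv, mul_smul]

theorem bshift_comp_rearrangement_smul {K : Type*} (hG : ∀ (g : G) (z : Z), g • z = z → g = 1)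
    (hu : ∀ h z, u h z • z = h • z) {v : G → Z → H} (hv : ∀ g z, v g z • z = g • z)
    (g : G) (z : Z) (x : G → K) :
    bshift g x ∘ rearrangement u (g • z) = bshift (v g z) (x ∘ rearrangement u z) := by
  funext h
  simp only [Function.comp_apply, bshift, rearrangement_smul hG hu hv, inv_mul_cancel_left]

end Rearrangement

theorem rearrangement_bijection_general
    {G H Z : Type*} [Group G] [Group H]
    (a : G → Z → Z) (b : H → Z → Z)
    (ha_one : ∀ z, a 1 z = z) (ha_mul : ∀ g g' z, a (g * g') z = a g (a g' z))
    (hb_one : ∀ z, b 1 z = z) (hb_mul : ∀ h h' z, b (h * h') z = b h (b h' z))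
    (ha_free : ∀ g z, a g z = z → g = 1)
    (hb_free : ∀ h z, b h z = z → h = 1)
    (h_orbits : ∀ z g, ∃ h : H, b h z = a g z)
    (u : H → Z → G) (hu : ∀ h z, a (u h z) z = b h z)
    (v : G → Z → H) (hv : ∀ g z, b (v g z) z = a g z)
    (μG : Measure (G → I)) (hμG : IsProductMeasure (volume : Measure I) μG)
    (μH : Measure (H → I)) (hμH : IsProductMeasure (volume : Measure I) μH) :
    ∀ z : Z,
      Function.Bijective (fun h : H => u h (b h⁻¹ z)) ∧
      Function.Bijective (fun (x : G → I) (h : H) => x (u h (b h⁻¹ z))) ∧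
      MeasurePreserving (fun (x : G → I) (h : H) => x (u h (b h⁻¹ z))) μG μH ∧
      ∀ (g : G) (x : G → I),
        (fun h : H => (bshift g x) (u h (b h⁻¹ (a g z))))
          = bshift (v g z) (fun h : H => x (u h (b h⁻¹ z))) := by
  let _ : MulAction G Z := { smul := a, one_smul := ha_one, mul_smul := ha_mul }
  let _ : MulAction H Z := { smul := b, one_smul := hb_one, mul_smul := hb_mul }
  intro z
  have hbij : Function.Bijective (rearrangement u z) :=
    rearrangement_bijective ha_free hb_free h_orbits hu z
  exact ⟨hbij, hbij.comp_right,
    hμG.measurePreserving_comp_equiv hμH (Equiv.ofBijective _ hbij),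
    fun g x => bshift_comp_rearrangement_smul ha_free hu hv g z x⟩

/-- Let `G ↷ Z` and `H ↷ Z` be free actions of countable groups with identical orbits,
with rearrangement cocycles `u : H × Z → G` and `v : G × Z → H`.  Then for each `z`,
the map `h ↦ u(h, h⁻¹ z)` is a bijection `H → G`; consequently
`Φ_z : [0,1]^G → [0,1]^H`, `Φ_z(b)(h) = b (u (h, h⁻¹ z))`, is a measure-preserving
bijection for the Lebesgue product measures, and `Φ_{g z}(g·b) = v(g,z)·Φ_z(b)` for
all `g`, where the groups act by Bernoulli shift. -/
theorem rearrangement_bijection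
    {G H Z : Type*} [Group G] [Countable G] [Group H] [Countable H]
    [MeasurableSpace Z] [StandardBorelSpace Z]
    (μZ : Measure Z) [IsProbabilityMeasure μZ]
    (a : G → Z → Z) (b : H → Z → Z)
    (ha_one : ∀ z, a 1 z = z) (ha_mul : ∀ g g' z, a (g * g') z = a g (a g' z))
    (hb_one : ∀ z, b 1 z = z) (hb_mul : ∀ h h' z, b (h * h') z = b h (b h' z))
    (ha_pmp : ∀ g, MeasurePreserving (a g) μZ μZ)
    (hb_pmp : ∀ h, MeasurePreserving (b h) μZ μZ)
    (ha_free : ∀ g z, a g z = z → g = 1)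
    (hb_free : ∀ h z, b h z = z → h = 1)
    (h_orbits : ∀ z g, ∃ h : H, b h z = a g z)
    (h_orbits' : ∀ z h, ∃ g : G, a g z = b h z)
    (u : H → Z → G) (hu : ∀ h z, a (u h z) z = b h z)
    (v : G → Z → H) (hv : ∀ g z, b (v g z) z = a g z)
    (μG : Measure (G → I)) (hμG : IsProductMeasure (volume : Measure I) μG)
    (μH : Measure (H → I)) (hμH : IsProductMeasure (volume : Measure I) μH) :
    ∀ z : Z,
      Function.Bijective (fun h : H => u h (b h⁻¹ z)) ∧
      Function.Bijective (fun (x : G → I) (h : H) => x (u h (b h⁻¹ z))) ∧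
      MeasurePreserving (fun (x : G → I) (h : H) => x (u h (b h⁻¹ z))) μG μH ∧
      ∀ (g : G) (x : G → I),
        (fun h : H => (bshift g x) (u h (b h⁻¹ (a g z))))
          = bshift (v g z) (fun h : H => x (u h (b h⁻¹ z))) :=
  rearrangement_bijection_general a b ha_one ha_mul hb_one hb_mul ha_free hb_free h_orbits u hu v hv
    μG hμG μH hμH
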